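/- Let κ be a real random variable with strictly increasing continuous CDF F, finite mean μ and standard deviation σ > 0. Then ∫ℝ ν · F⁻¹(Φ(ν)) · φ(ν) dν > 0, where Φ and φ are the standard normal CDF and PDF and F⁻¹ is the inverse of F. -/

import Mathlib

open MeasureTheory ProbabilityTheory Set

noncomputable def stdphi (x : ℝ) : ℝ := Real.exp (-(x ^ 2) / 2) / Real.sqrt (2 * Real.pi)

noncomputable def stdPhi (x : ℝ) : ℝ := ∫ t in Set.Iic x, stdphi t

noncomputable def quantile (F : ℝ → ℝ) (p : ℝ) : ℝ := sInf {x : ℝ | p ≤ F x}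

noncomputable def stdPhiInv (p : ℝ) : ℝ := quantile stdPhi p

noncomputable def biphi (r k e : ℝ) : ℝ :=
  Real.exp (-((k ^ 2 - 2 * r * k * e + e ^ 2) / (2 * (1 - r ^ 2)))) /
    (2 * Real.pi * Real.sqrt (1 - r ^ 2))

lemma stdphi_eq : stdphi = gaussianPDFReal 0 1 := by
  funext x
  simp [stdphi, gaussianPDFReal, div_eq_inv_mul, mul_comm]

lemma stdphi_pos (x : ℝ) : 0 < stdphi x := by
  have := Real.sqrt_pos.mpr (by positivity : (0:ℝ) < 2 * Real.pi)
  exact div_pos (Real.exp_pos _) this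

lemma stdphi_integrable : Integrable stdphi := by
  rw [stdphi_eq]; exact integrable_gaussianPDFReal 0 1

lemma stdphi_integral_one : ∫ x, stdphi x = 1 := by
  rw [stdphi_eq]; exact integral_gaussianPDFReal_eq_one 0 one_ne_zero

lemma stdPhi_strictMono : StrictMono stdPhi := by
  intro x y hxy
  have hx : IntegrableOn stdphi (Iic x) := stdphi_integrable.integrableOn
  have hy : IntegrableOn stdphi (Iic y) := stdphi_integrable.integrableOn
  have h := intervalIntegral.integral_Iic_sub_Iic hx hy
  have hpos : 0 < ∫ t in x..y, stdphi t :=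
    intervalIntegral.intervalIntegral_pos_of_pos
      (stdphi_integrable.intervalIntegrable) stdphi_pos hxy
  have : stdPhi y - stdPhi x = ∫ t in x..y, stdphi t := h
  linarith

lemma stdPhi_pos (x : ℝ) : 0 < stdPhi x := by
  rw [stdPhi]
  rw [setIntegral_pos_iff_support_of_nonneg_ae
    (Filter.Eventually.of_forall fun t => (stdphi_pos t).le)
    stdphi_integrable.integrableOn]
  have : Function.support stdphi = univ := by
    ext t; simp [Function.support, (stdphi_pos t).ne']
  rw [this, univ_inter]
  simp [Real.volume_Iic]

lemma stdPhi_lt_one (x : ℝ) : stdPhi x < 1 := by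
  have h := intervalIntegral.integral_Iic_add_Ioi (b := x)
    stdphi_integrable.integrableOn stdphi_integrable.integrableOn
  rw [stdphi_integral_one] at h
  have hpos : 0 < ∫ t in Ioi x, stdphi t := by
    rw [setIntegral_pos_iff_support_of_nonneg_ae
      (Filter.Eventually.of_forall fun t => (stdphi_pos t).le)
      stdphi_integrable.integrableOn]
    have : Function.support stdphi = univ := by
      ext t; simp [Function.support, (stdphi_pos t).ne']
    rw [this, univ_inter]
    simp [Real.volume_Ioi]
  have : stdPhi x = 1 - ∫ t in Ioi x, stdphi t := by rw [stdPhi]; linarith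
  linarith

lemma mul_stdphi_integrable : Integrable (fun x => x * stdphi x) := by
  have h := integrable_mul_exp_neg_mul_sq (b := (1:ℝ)/2) (by norm_num)
  have := h.mul_const (Real.sqrt (2 * Real.pi))⁻¹
  refine this.congr (Filter.Eventually.of_forall fun x => ?_)
  simp only [stdphi]
  rw [div_eq_mul_inv]
  ring_nf

lemma mul_stdphi_integral_zero : ∫ x, x * stdphi x = 0 := by
  have h : ∫ x, (-x) * stdphi (-x) = ∫ x, x * stdphi x := integral_neg_eq_self (fun x => x * stdphi x) volume
  have h2 : ∀ x : ℝ, (-x) * stdphi (-x) = -(x * stdphi x) := by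
    intro x
    have : (-x)^2 = x^2 := by ring
    rw [stdphi, stdphi, this]; ring
  simp_rw [h2, integral_neg] at h
  linarith

theorem stmt_0
    {Ω : Type*} [MeasurableSpace Ω] (P : Measure Ω) [IsProbabilityMeasure P]
    (κ : Ω → ℝ) (hκ : Measurable κ) (hκ2 : MemLp κ 2 P)
    (F Finv : ℝ → ℝ)
    (hF : ∀ x, F x = (P (κ ⁻¹' Set.Iic x)).toReal)
    (hFc : Continuous F) (hFmono : StrictMono F)
    (hFinv : Function.LeftInverse Finv F)
    (hσ : 0 < Real.sqrt (variance κ P))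
    (hInt : Integrable (fun ν => ν * Finv (stdPhi ν) * stdphi ν)) :
    0 < ∫ ν, ν * Finv (stdPhi ν) * stdphi ν := by
  -- F is the cdf of the pushforward measure
  have hmap : IsProbabilityMeasure (P.map κ) := Measure.isProbabilityMeasure_map hκ.aemeasurable
  have hFcdf : ∀ x, F x = cdf (P.map κ) x := by
    intro x
    rw [hF x, cdf_eq_real, measureReal_def, Measure.map_apply hκ measurableSet_Iic]
  have htop : Filter.Tendsto F Filter.atTop (nhds 1) := by
    simp_rw [funext hFcdf]; exact tendsto_cdf_atTop _
  have hbot : Filter.Tendsto F Filter.atBot (nhds 0) := by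
    simp_rw [funext hFcdf]; exact tendsto_cdf_atBot _
  -- surjectivity of F onto Ioo 0 1
  have hsurj : ∀ p ∈ Ioo (0:ℝ) 1, ∃ x, F x = p := by
    rintro p ⟨hp0, hp1⟩
    obtain ⟨b, hb⟩ := (htop.eventually (eventually_gt_nhds hp1)).exists
    obtain ⟨a, ha⟩ := (hbot.eventually (eventually_lt_nhds hp0)).exists
    have hab : a ≤ b := le_of_lt (hFmono.lt_iff_lt.mp (ha.trans hb))
    have := intermediate_value_Icc hab hFc.continuousOn
    obtain ⟨x, _, hx⟩ := this ⟨ha.le, hb.le⟩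
    exact ⟨x, hx⟩
  -- Finv is strictly monotone on Ioo 0 1
  have hFinvmono : ∀ p ∈ Ioo (0:ℝ) 1, ∀ q ∈ Ioo (0:ℝ) 1, p < q → Finv p < Finv q := by
    intro p hp q hq hpq
    obtain ⟨a, ha⟩ := hsurj p hp
    obtain ⟨b, hb⟩ := hsurj q hq
    rw [← ha, ← hb, hFinv a, hFinv b]
    exact hFmono.lt_iff_lt.mp (by rw [ha, hb]; exact hpq)
  set c : ℝ := Finv (stdPhi 0) with hc
  have hmem : ∀ ν : ℝ, stdPhi ν ∈ Ioo (0:ℝ) 1 := fun ν => ⟨stdPhi_pos ν, stdPhi_lt_one ν⟩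
  -- the shifted integrand is nonneg, positive away from 0
  have hpos : ∀ ν : ℝ, ν ≠ 0 → 0 < ν * (Finv (stdPhi ν) - c) * stdphi ν := by
    intro ν hν
    rcases lt_or_gt_of_ne hν with h | h
    · have : Finv (stdPhi ν) < c :=
        hFinvmono _ (hmem ν) _ (hmem 0) (stdPhi_strictMono h)
      have h2 : Finv (stdPhi ν) - c < 0 := by linarith
      exact mul_pos (mul_pos_of_neg_of_neg h h2) (stdphi_pos ν)
    · have : c < Finv (stdPhi ν) :=
        hFinvmono _ (hmem 0) _ (hmem ν) (stdPhi_strictMono h)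
      exact mul_pos (mul_pos h (by linarith)) (stdphi_pos ν)
  have hnonneg : ∀ ν : ℝ, 0 ≤ ν * (Finv (stdPhi ν) - c) * stdphi ν := by
    intro ν
    rcases eq_or_ne ν 0 with rfl | h
    · simp
    · exact (hpos ν h).le
  have hint2 : Integrable (fun ν => ν * (Finv (stdPhi ν) - c) * stdphi ν) := by
    have := hInt.sub ((mul_stdphi_integrable).const_mul c)
    refine this.congr (Filter.Eventually.of_forall fun ν => ?_)
    simp only [Pi.sub_apply]
    ring
  have hkey : ∫ ν, ν * (Finv (stdPhi ν) - c) * stdphi ν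
      = (∫ ν, ν * Finv (stdPhi ν) * stdphi ν) - c * ∫ ν, ν * stdphi ν := by
    rw [← integral_const_mul, ← integral_sub hInt ((mul_stdphi_integrable).const_mul c)]
    congr 1; funext ν; ring
  have hpos2 : 0 < ∫ ν, ν * (Finv (stdPhi ν) - c) * stdphi ν := by
    rw [integral_pos_iff_support_of_nonneg_ae
      (Filter.Eventually.of_forall hnonneg) hint2]
    have hsub : {(0:ℝ)}ᶜ ⊆ Function.support fun ν => ν * (Finv (stdPhi ν) - c) * stdphi ν := by
      intro ν hν
      exact (hpos ν hν).ne'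
    have h1 : (0:ENNReal) < volume (Ioi (0:ℝ)) := by simp [Real.volume_Ioi]
    have h2 : Ioi (0:ℝ) ⊆ {(0:ℝ)}ᶜ := fun x hx => ne_of_gt hx
    exact lt_of_lt_of_le h1 (measure_mono (h2.trans hsub))
  rw [hkey, mul_stdphi_integral_zero, mul_zero, sub_zero] at hpos2
  exact hpos2
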